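/- A rule in set normal form is applicable in a state σ = ⟨Δ; γ; υ⟩ iff for each buffer test (b,t,P) the chunk in buffer b has delay 0, type t, and its value list equals Pθ for the binding substitution θ; in particular, for a matching test in set normal form Pθ = ⟦val⟧ (the sorted enumerative list of the chunk's value function). -/

import Mathlib

abbrev AConst := ℕ
abbrev AVar := ℕ

inductive AVal where
  | const : AConst → AVal
  | var : AVar → AVal
deriving DecidableEq

abbrev Subst := AVar → AConst

def AVal.app (θ : Subst) : AVal → AConst
  | .const c => c
  | .var v => θ v

structure BufferTest where
  buf : AConst
  typ : AConst
  slots : Finset (AConst × AVal)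
deriving DecidableEq

structure ARule (RH : Type) where
  lhs : Finset BufferTest
  rhs : RH

structure Chunk where
  ctyp : AConst
  cval : AConst → AConst

structure AState where
  store : AConst → Option Chunk
  cog : AConst → AConst × NNReal
  info : Prop

def testMatches (σ : AState) (θ : Subst) (t : BufferTest) : Prop :=
  ∃ c : Chunk, σ.store (σ.cog t.buf).1 = some c ∧ (σ.cog t.buf).2 = 0 ∧
    c.ctyp = t.typ ∧ ∀ p ∈ t.slots, c.cval p.1 = p.2.app θ

def ruleMatches {RH} (σ : AState) (θ : Subst) (r : ARule RH) : Prop :=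
  ∀ t ∈ r.lhs, testMatches σ θ t

/-- Set normal form: each slot of τ(t) occurs exactly once, and only those slots. -/
def SNF {RH} (τ : AConst → Finset AConst) (r : ARule RH) : Prop :=
  ∀ t ∈ r.lhs, (∀ s ∈ τ t.typ, ∃! v : AVal, (s, v) ∈ t.slots) ∧
    (∀ p ∈ t.slots, p.1 ∈ τ t.typ)

/-! In set normal form the slots of a test `(b, t, P)` project onto exactly `τ t`, so both `Pθ` and
`⟦val⟧` are graphs over the same domain, and two graphs over the same domain are equal iff they
agree pointwise — which is the matching condition `val s = vθ` for every `(s, v) ∈ P`. -/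

theorem Finset.image_map_snd_eq_image_graph_iff {α β γ : Type*} [DecidableEq α] [DecidableEq γ]
    {P : Finset (α × β)} {T : Finset α} (hdom : P.image Prod.fst = T) (f : β → γ) (g : α → γ) :
    P.image (fun p => (p.1, f p.2)) = T.image (fun s => (s, g s)) ↔ ∀ p ∈ P, g p.1 = f p.2 := by
  constructor
  · intro h p hp
    have hmem : (p.1, f p.2) ∈ T.image (fun s => (s, g s)) := h ▸ mem_image_of_mem _ hp
    obtain ⟨s, -, hs⟩ := mem_image.1 hmem
    obtain ⟨rfl, hgs⟩ := Prod.mk.inj hs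
    exact hgs
  · intro h
    subst hdom
    ext ⟨a, c⟩
    simp only [mem_image, Prod.mk.injEq, Prod.exists]
    constructor
    · rintro ⟨s, v, hsv, rfl, rfl⟩
      exact ⟨s, ⟨s, v, hsv, rfl⟩, rfl, h _ hsv⟩
    · rintro ⟨s, ⟨s, v, hsv, rfl⟩, rfl, rfl⟩
      exact ⟨s, v, hsv, rfl, (h _ hsv).symm⟩

theorem image_fst_slots_eq_of_snf {RH : Type} {τ : AConst → Finset AConst} {r : ARule RH}
    (hsnf : SNF τ r) {t : BufferTest} (ht : t ∈ r.lhs) : t.slots.image Prod.fst = τ t.typ := by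
  obtain ⟨hcover, hdom⟩ := hsnf t ht
  ext s
  constructor
  · intro hs
    obtain ⟨p, hp, rfl⟩ := Finset.mem_image.1 hs
    exact hdom p hp
  · intro hs
    obtain ⟨v, hv, -⟩ := hcover s hs
    exact Finset.mem_image_of_mem Prod.fst hv

theorem testMatches_iff_image_eq {τ : AConst → Finset AConst} {t : BufferTest}
    (hdom : t.slots.image Prod.fst = τ t.typ) (σ : AState) (θ : Subst) :
    testMatches σ θ t ↔ ∃ c : Chunk,
      σ.store (σ.cog t.buf).1 = some c ∧ (σ.cog t.buf).2 = 0 ∧ c.ctyp = t.typ ∧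
        t.slots.image (fun p => (p.1, p.2.app θ)) = (τ t.typ).image (fun s => (s, c.cval s)) := by
  simp only [testMatches, Finset.image_map_snd_eq_image_graph_iff hdom]

/-- A rule in set normal form is applicable in a state σ iff for
each buffer test (b,t,P) the chunk in buffer b has delay 0, type t, and its
(sorted enumerative) value list equals Pθ for the binding substitution θ; in
particular, for a matching test in set normal form Pθ = ⟦val⟧. Here ⟦val⟧ is
represented as the finite set of pairs (s, val(s)) for s ∈ τ(t). -/
theorem snf_matching_characterization
    {RH : Type} (τ : AConst → Finset AConst)
    (r : ARule RH) (hsnf : SNF τ r) (σ : AState) (θ : Subst) :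
    ruleMatches σ θ r ↔
      ∀ tst ∈ r.lhs, ∃ c : Chunk,
        σ.store (σ.cog tst.buf).1 = some c ∧
        (σ.cog tst.buf).2 = 0 ∧
        c.ctyp = tst.typ ∧
        tst.slots.image (fun p => (p.1, p.2.app θ)) =
          (τ tst.typ).image (fun s => (s, c.cval s)) :=
  forall₂_congr fun _ ht => testMatches_iff_image_eq (image_fst_slots_eq_of_snf hsnf ht) σ θ
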